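/- Let U_1, …, U_M be unitary operators on ℂ^d and let e_0, …, e_M be the standard orthonormal basis of the clock register ℂ^{M+1}. Define the propagation Hamiltonian H_prop = Σ_{t=1}^{M} H_t on ℂ^d ⊗ ℂ^{M+1}, where H_t = −(1/2) U_t ⊗ |e_t⟩⟨e_{t−1}| − (1/2) U_t^† ⊗ |e_{t−1}⟩⟨e_t| + (1/2) I ⊗ (|e_t⟩⟨e_t| + |e_{t−1}⟩⟨e_{t−1}|). Then: (i) H_prop is positive semidefinite, and (ii) the kernel of H_prop is exactly the set of history states, i.e., ker(H_prop) = { (M+1)^{-1/2} Σ_{t=0}^{M} (U_t ⋯ U_1 φ) ⊗ e_t : φ ∈ ℂ^d } (with the t = 0 term being φ ⊗ e_0). -/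

import Mathlib

open scoped Kronecker ComplexOrder

/-- `gateProd U t = U_t * U_{t-1} * ⋯ * U_1` (0-indexed gates; out-of-range gates act as `1`). -/
noncomputable def gateProd {d M : ℕ} (U : Fin M → Matrix (Fin d) (Fin d) ℂ) :
    ℕ → Matrix (Fin d) (Fin d) ℂ
  | 0 => 1
  | t + 1 => (if h : t < M then U ⟨t, h⟩ else 1) * gateProd U t

/-- The Feynman–Kitaev propagation Hamiltonian
`H_prop = ∑_{t=1}^{M} (−(1/2) U_t ⊗ |e_t⟩⟨e_{t−1}| − (1/2) U_t† ⊗ |e_{t−1}⟩⟨e_t|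
+ (1/2) I ⊗ (|e_t⟩⟨e_t| + |e_{t−1}⟩⟨e_{t−1}|))` on `ℂ^d ⊗ ℂ^{M+1}`. -/
noncomputable def Hprop {d M : ℕ} (U : Fin M → Matrix (Fin d) (Fin d) ℂ) :
    Matrix (Fin d × Fin (M + 1)) (Fin d × Fin (M + 1)) ℂ :=
  ∑ t : Fin M,
    ((-(1 / 2 : ℂ)) • (U t ⊗ₖ Matrix.single t.succ t.castSucc (1 : ℂ))
      + (-(1 / 2 : ℂ)) •
          ((U t).conjTranspose ⊗ₖ Matrix.single t.castSucc t.succ (1 : ℂ))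
      + (1 / 2 : ℂ) • ((1 : Matrix (Fin d) (Fin d) ℂ) ⊗ₖ
          (Matrix.single t.succ t.succ (1 : ℂ)
            + Matrix.single t.castSucc t.castSucc (1 : ℂ))))

/-!
For unitary `U_t`, each term of `H_prop` factors as `½ B_tᴴ B_t`, where `B_t` measures the failure
of the clock slices `v_t ∈ ℂ^d` of `v` to propagate: `B_t v = (v_{t+1} - U_t v_t) ⊗ e_{t+1}`.
So `H_prop` is a sum of Gram matrices, hence positive semidefinite, and `H_prop v = 0` iff every
`B_t v = 0`, i.e. `v_{t+1} = U_t v_t` for all `t`, i.e. `v_t = U_t ⋯ U_1 v_0`: a history state.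
-/

open Matrix

namespace Matrix

variable {ι m n R : Type*}

theorem sum_conjTranspose_mul_self_mulVec_eq_zero_iff [Fintype ι] [Fintype m] [Fintype n]
    [PartialOrder R] [CommRing R] [StarRing R] [StarOrderedRing R] [NoZeroDivisors R]
    (A : ι → Matrix m n R) (v : n → R) :
    (∑ i, (A i)ᴴ * A i) *ᵥ v = 0 ↔ ∀ i, A i *ᵥ v = 0 := by
  -- stacking the `A i` on top of each other turns the sum into a single Gram matrix
  let B : Matrix (ι × m) n R := of fun p j => A p.1 p.2 j
  have hB : ∑ i, (A i)ᴴ * A i = Bᴴ * B := by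
    ext j k
    simp [B, mul_apply, sum_apply, Fintype.sum_prod_type]
  rw [hB, conjTranspose_mul_self_mulVec_eq_zero, funext_iff, Prod.forall]
  simp only [funext_iff]
  rfl

theorem kronecker_single_one_mulVec {l : Type*} [Fintype n] [Fintype l] [DecidableEq l]
    [Semiring R] (A : Matrix m n R) (s r : l) (v : n × l → R) :
    (A ⊗ₖ single s r 1) *ᵥ v = fun p => if p.2 = s then (A *ᵥ fun j => v (j, r)) p.1 else 0 := by
  ext ⟨i, q⟩
  obtain rfl | hqs := eq_or_ne q s
  · simp [mulVec, dotProduct, Fintype.sum_prod_type, single_apply]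
  · simp [mulVec, dotProduct, hqs.symm, hqs]

end Matrix

section

variable {d M : ℕ}

theorem gateProd_succ (U : Fin M → Matrix (Fin d) (Fin d) ℂ) (t : Fin M) :
    gateProd U (t + 1) = U t * gateProd U t := by
  simp [gateProd]

theorem forall_succ_eq_mulVec_castSucc_iff (U : Fin M → Matrix (Fin d) (Fin d) ℂ)
    (w : Fin (M + 1) → Fin d → ℂ) :
    (∀ t : Fin M, w t.succ = U t *ᵥ w t.castSucc) ↔ ∃ φ, ∀ t, w t = gateProd U t *ᵥ φ := by
  constructor
  · intro hw
    refine ⟨w 0, Fin.induction (by simp [gateProd]) fun t ht => ?_⟩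
    rw [hw, ht, Fin.val_succ, gateProd_succ, mulVec_mulVec, Fin.val_castSucc]
  · rintro ⟨φ, hφ⟩ t
    rw [hφ, hφ, Fin.val_succ, gateProd_succ, ← mulVec_mulVec, Fin.val_castSucc]

noncomputable def propagationDefect (U : Fin M → Matrix (Fin d) (Fin d) ℂ) (t : Fin M) :
    Matrix (Fin d × Fin (M + 1)) (Fin d × Fin (M + 1)) ℂ :=
  1 ⊗ₖ single t.succ t.succ 1 - U t ⊗ₖ single t.succ t.castSucc 1

theorem Hprop_eq_smul_sum_conjTranspose_mul_self (U : Fin M → Matrix (Fin d) (Fin d) ℂ)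
    (hU : ∀ t, (U t)ᴴ * U t = 1) :
    Hprop U = (1 / 2 : ℂ) • ∑ t, (propagationDefect U t)ᴴ * propagationDefect U t := by
  rw [Finset.smul_sum, Hprop]
  refine Finset.sum_congr rfl fun t _ => ?_
  simp only [propagationDefect, conjTranspose_sub, conjTranspose_kronecker, conjTranspose_one,
    conjTranspose_single, star_one, sub_mul, mul_sub, ← mul_kronecker_mul, single_mul_single_same,
    one_mul, mul_one, hU, kronecker_add]
  module

theorem propagationDefect_mulVec_eq_zero_iff (U : Fin M → Matrix (Fin d) (Fin d) ℂ) (t : Fin M)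
    (v : Fin d × Fin (M + 1) → ℂ) :
    propagationDefect U t *ᵥ v = 0 ↔
      (fun i => v (i, t.succ)) = U t *ᵥ fun i => v (i, t.castSucc) := by
  simp only [propagationDefect, sub_mulVec, kronecker_single_one_mulVec, one_mulVec]
  constructor
  · intro h
    ext i
    simpa [sub_eq_zero] using congrFun h (i, t.succ)
  · intro h
    ext ⟨i, q⟩
    simp [← h]

end

theorem Hprop_posSemidef_and_kernel_general
    (d M : ℕ)
    (U : Fin M → Matrix (Fin d) (Fin d) ℂ)
    (hU : ∀ t, U t ∈ Matrix.unitaryGroup (Fin d) ℂ) :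
    (Hprop U).PosSemidef ∧
    {v : Fin d × Fin (M + 1) → ℂ | (Hprop U).mulVec v = 0}
      = {v : Fin d × Fin (M + 1) → ℂ | ∃ φ : Fin d → ℂ,
          v = fun p => (Real.sqrt (M + 1) : ℂ)⁻¹ * (gateProd U (p.2 : ℕ)).mulVec φ p.1} := by
  have hH := Hprop_eq_smul_sum_conjTranspose_mul_self U fun t => mem_unitaryGroup_iff'.1 (hU t)
  constructor
  · rw [hH]
    exact (posSemidef_sum _ fun t _ => posSemidef_conjTranspose_mul_self _).smul one_half_pos.le
  have hc : (Real.sqrt (M + 1) : ℂ) ≠ 0 := by positivity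
  ext v
  simp only [Set.mem_ofPred_eq, hH, smul_mulVec, smul_eq_zero, one_div, inv_eq_zero,
    two_ne_zero, false_or, sum_conjTranspose_mul_self_mulVec_eq_zero_iff,
    propagationDefect_mulVec_eq_zero_iff,
    forall_succ_eq_mulVec_castSucc_iff U fun t i => v (i, t)]
  constructor
  · rintro ⟨φ, hφ⟩
    refine ⟨(Real.sqrt (M + 1) : ℂ) • φ, funext fun p => ?_⟩
    simp [mulVec_smul, ← congrFun (hφ p.2) p.1, hc]
  · rintro ⟨φ, rfl⟩
    exact ⟨(Real.sqrt (M + 1) : ℂ)⁻¹ • φ, fun t => funext fun i => by simp [mulVec_smul]⟩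

/-- `H_prop` is positive semidefinite and its kernel is exactly the set of
history states `(M+1)^{-1/2} ∑_{t=0}^{M} (U_t ⋯ U_1 φ) ⊗ e_t`, `φ ∈ ℂ^d`. -/
theorem Hprop_posSemidef_and_kernel
    (d M : ℕ) (hd : 0 < d)
    (U : Fin M → Matrix (Fin d) (Fin d) ℂ)
    (hU : ∀ t, U t ∈ Matrix.unitaryGroup (Fin d) ℂ) :
    (Hprop U).PosSemidef ∧
    {v : Fin d × Fin (M + 1) → ℂ | (Hprop U).mulVec v = 0}
      = {v : Fin d × Fin (M + 1) → ℂ | ∃ φ : Fin d → ℂ,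
          v = fun p => (Real.sqrt (M + 1) : ℂ)⁻¹ * (gateProd U (p.2 : ℕ)).mulVec φ p.1} :=
  Hprop_posSemidef_and_kernel_general d M U hU
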